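/- arXiv:2112.13397 — 2 statements merged into one kernel-verified Lean document; each statement's English description precedes it below -/
import Mathlib

section
/- Let β > 0 and let n ≥ 2 be a natural number; set λ = 1 − 2/n and E^F(m, l) = 2m + |l| + F + λ(l + F) for m ∈ ℕ, l ∈ ℤ, F ∈ {0,1,2}. Then the family over (m, l) ∈ ℕ × ℤ of e^{−β·E⁰(m,l)} − 2·e^{−β·E¹(m,l)} + e^{−β·E²(m,l)} is summable, with sum Σ_{k=0}^{n−2} e^{−2βk/n}. -/
/-- The spectrum `E^F_{ml} = 2m + |l| + F + λ(l + F)` of the modified Hamiltonian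
`H_λ` of the complex weak supersymmetric model. -/
noncomputable def Elevel (lam : ℝ) (F : ℕ) (m : ℕ) (l : ℤ) : ℝ :=
  2 * m + |(l : ℝ)| + F + lam * ((l : ℝ) + F)

set_option maxHeartbeats 1000000 in
/-- **Equation (4.15) of the paper:** for the special value `λ = 1 − 2/n` the
Witten (Römelsberger) index of the complex weak supersymmetric model collapses
to the finite sum `I(n) = Σ_{k=0}^{n−2} e^{−2βk/n}`. -/
theorem romelsberger_index_special_lambda (β : ℝ) (hβ : 0 < β) (n : ℕ) (hn : 2 ≤ n) :
    HasSum
      (fun p : ℕ × ℤ =>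
        Real.exp (-β * Elevel (1 - 2 / n) 0 p.1 p.2)
          - 2 * Real.exp (-β * Elevel (1 - 2 / n) 1 p.1 p.2)
          + Real.exp (-β * Elevel (1 - 2 / n) 2 p.1 p.2))
      (∑ k ∈ Finset.range (n - 1), Real.exp (-2 * β * k / n)) := by
  have hn2 : (2:ℝ) ≤ (n:ℝ) := by exact_mod_cast hn
  have hnpos : (0:ℝ) < n := by linarith
  have hnne : (n:ℝ) ≠ 0 := ne_of_gt hnpos
  set lam : ℝ := 1 - 2 / n with hlam
  have h1lam : 0 < 1 + lam := by
    have : 2 / (n:ℝ) ≤ 1 := by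
      rw [div_le_one hnpos]; exact hn2
    simp only [hlam]; linarith
  set r : ℝ := Real.exp (-(2*β/n)) with hr
  set q : ℝ := Real.exp (-(β*(1+lam))) with hq
  set a : ℝ := Real.exp (-(2*β)) with ha
  have hr0 : 0 < r := Real.exp_pos _
  have hq0 : 0 < q := Real.exp_pos _
  have ha0 : 0 < a := Real.exp_pos _
  have hr1 : r < 1 := by
    rw [hr, Real.exp_lt_one_iff]
    have : 0 < 2 * β / n := by positivity
    linarith
  have hq1 : q < 1 := by
    rw [hq, Real.exp_lt_one_iff]
    have : 0 < β * (1 + lam) := mul_pos hβ h1lam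
    linarith
  have ha1 : a < 1 := by
    rw [ha, Real.exp_lt_one_iff]
    linarith
  have hcast : ((n - 1 : ℕ) : ℝ) = (n:ℝ) - 1 := by
    have h1 : 1 ≤ n := by omega
    rw [Nat.cast_sub h1, Nat.cast_one]
  have hqr : q = r ^ (n - 1) := by
    rw [hq, hr, ← Real.exp_nat_mul, hcast]
    congr 1
    field_simp [hlam]
    have hlamn : lam * n = n - 2 := by rw [hlam, sub_mul, div_mul_cancel₀ _ hnne]; ring
    linear_combination (-1 : ℝ) * hlamn
  have haqr : a = q * r := by
    rw [ha, hq, hr, ← Real.exp_add]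
    congr 1
    field_simp [hlam]
    have hlamn : lam * n = n - 2 := by rw [hlam, sub_mul, div_mul_cancel₀ _ hnne]; ring
    linear_combination hlamn
  -- geometric sums
  have hga : HasSum (fun m : ℕ => a ^ m) (1 - a)⁻¹ :=
    hasSum_geometric_of_lt_one ha0.le ha1
  have hgq : HasSum (fun k : ℕ => q ^ k) (1 - q)⁻¹ :=
    hasSum_geometric_of_lt_one hq0.le hq1
  have hneg : HasSum (fun k : ℕ => r ^ (k + 1)) ((1 - r)⁻¹ * r) := by
    have := (hasSum_geometric_of_lt_one hr0.le hr1).mul_right r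
    simpa [pow_succ] using this
  -- sum over ℤ
  have hZ : HasSum (fun l : ℤ => Real.exp (-β * (|(l:ℝ)| + lam * l)))
      ((1 - q)⁻¹ + (1 - r)⁻¹ * r) := by
    apply HasSum.of_nat_of_neg_add_one
    · show HasSum (fun k : ℕ => Real.exp (-β * (|(((k:ℤ)):ℝ)| + lam * (((k:ℤ)):ℝ))))
        ((1 - q)⁻¹)
      have hfe : (fun k : ℕ => Real.exp (-β * (|(((k:ℤ)):ℝ)| + lam * (((k:ℤ)):ℝ))))
          = fun k : ℕ => q ^ k := by
        funext k
        rw [hq, ← Real.exp_nat_mul]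
        congr 1
        push_cast
        rw [abs_of_nonneg (by positivity : (0:ℝ) ≤ (k:ℝ))]
        ring
      rw [hfe]; exact hgq
    · show HasSum (fun k : ℕ => Real.exp (-β *
          (|(((-((k:ℤ)+1) : ℤ)):ℝ)| + lam * (((-((k:ℤ)+1) : ℤ)):ℝ))))
        ((1 - r)⁻¹ * r)
      have hfe : (fun k : ℕ => Real.exp (-β *
            (|(((-((k:ℤ)+1) : ℤ)):ℝ)| + lam * (((-((k:ℤ)+1) : ℤ)):ℝ))))
          = fun k : ℕ => r ^ (k + 1) := by
        funext k
        rw [hr, ← Real.exp_nat_mul]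
        congr 1
        push_cast
        rw [abs_neg, abs_of_nonneg (by positivity : (0:ℝ) ≤ (k:ℝ) + 1)]
        simp only [hlam]
        field_simp
        ring
      rw [hfe]; exact hneg
  -- product sum
  have hfpos : ∀ m : ℕ, 0 ≤ a ^ m := fun m => pow_nonneg ha0.le m
  have hgpos : ∀ l : ℤ, 0 ≤ Real.exp (-β * (|(l:ℝ)| + lam * l)) := fun l => (Real.exp_pos _).le
  have hsummul : Summable (fun p : ℕ × ℤ =>
      a ^ p.1 * Real.exp (-β * (|(p.2:ℝ)| + lam * p.2))) :=
    hga.summable.mul_of_nonneg hZ.summable hfpos hgpos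
  have hprod : HasSum (fun p : ℕ × ℤ =>
      a ^ p.1 * Real.exp (-β * (|(p.2:ℝ)| + lam * p.2)))
      ((1 - a)⁻¹ * ((1 - q)⁻¹ + (1 - r)⁻¹ * r)) :=
    hga.mul hZ hsummul
  have hmul := hprod.mul_left ((1 - q) ^ 2)
  -- pointwise identity
  have key : ∀ (m : ℕ) (l : ℤ),
      Real.exp (-β * Elevel lam 0 m l) - 2 * Real.exp (-β * Elevel lam 1 m l)
        + Real.exp (-β * Elevel lam 2 m l)
      = (1 - q) ^ 2 * (a ^ m * Real.exp (-β * (|(l:ℝ)| + lam * l))) := by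
    intro m l
    have h : ∀ F : ℕ, Real.exp (-β * Elevel lam F m l)
        = a ^ m * Real.exp (-β * (|(l:ℝ)| + lam * l)) * q ^ F := by
      intro F
      rw [show -β * Elevel lam F m l
          = (m : ℝ) * (-(2*β)) + (-β * (|(l:ℝ)| + lam * l)) + (F : ℝ) * (-(β*(1+lam))) by
        simp only [Elevel]; ring]
      rw [Real.exp_add, Real.exp_add, Real.exp_nat_mul, Real.exp_nat_mul, ← ha, ← hq]
    simp only [h]; ring
  -- identify the value
  have hterm : ∀ k : ℕ, Real.exp (-2 * β * k / n) = r ^ k := by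
    intro k
    rw [hr, ← Real.exp_nat_mul]
    congr 1
    field_simp
  have h1q : (1:ℝ) - q ≠ 0 := by linarith
  have h1r : (1:ℝ) - r ≠ 0 := by linarith
  have h1a : (1:ℝ) - a ≠ 0 := by linarith
  have hS : (1 - q) ^ 2 * ((1 - a)⁻¹ * ((1 - q)⁻¹ + (1 - r)⁻¹ * r))
      = ∑ k ∈ Finset.range (n - 1), Real.exp (-2 * β * k / n) := by
    rw [Finset.sum_congr rfl fun k _ => hterm k, geom_sum_eq hr1.ne, ← hqr, haqr]
    have h1a' : (1:ℝ) - q * r ≠ 0 := by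
      have : q * r < 1 := by
        calc q * r < 1 * 1 := by
              apply mul_lt_mul' hq1.le hr1 hr0.le one_pos
        _ = 1 := by ring
      linarith
    have hrm1 : r - 1 ≠ 0 := sub_ne_zero.mpr hr1.ne
    field_simp
    ring
  rw [← hS]
  have hfe : (fun p : ℕ × ℤ =>
        Real.exp (-β * Elevel lam 0 p.1 p.2)
          - 2 * Real.exp (-β * Elevel lam 1 p.1 p.2)
          + Real.exp (-β * Elevel lam 2 p.1 p.2))
      = fun p : ℕ × ℤ => (1 - q) ^ 2 * (a ^ p.1 * Real.exp (-β * (|(p.2:ℝ)| + lam * p.2))) :=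
    funext fun p => key p.1 p.2
  rw [hfe]
  exact hmul
end

section
/- Define the differential operator 𝒟 acting on smooth functions f : ℝ² → ℂ by (𝒟 f)(x, y) = −(1/4)·(∂²f/∂x² + ∂²f/∂y²) + (x² + y²)·f − f + (i/3)·(y·∂f/∂x − x·∂f/∂y). Then: (i) for g₁(x, y) = (x + iy)·e^{−(x² + y²)} one has 𝒟 g₁ = (4/3)·g₁; and (ii) for g₂(x, y) = (x − iy)²·e^{−(x² + y²)} one has 𝒟 g₂ = (4/3)·g₂. -/
noncomputable section

/-- `∂f/∂x`. -/
def Dx (f : ℝ × ℝ → ℂ) : ℝ × ℝ → ℂ := fun p => fderiv ℝ f p (1, 0)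

/-- `∂f/∂y`. -/
def Dy (f : ℝ × ℝ → ℂ) : ℝ × ℝ → ℂ := fun p => fderiv ℝ f p (0, 1)

/-- The zero-fermion sector of the Hamiltonian `H_{1/3}` of the complex weak
supersymmetric model at `λ = 1/3`:
`𝒟 f = −(1/4)Δf + (x² + y²) f − f + (i/3)(y ∂_x f − x ∂_y f)`. -/
def Dop (f : ℝ × ℝ → ℂ) : ℝ × ℝ → ℂ := fun p =>
  -(1 / 4 : ℂ) * (Dx (Dx f) p + Dy (Dy f) p)
    + ((p.1 ^ 2 + p.2 ^ 2 : ℝ) : ℂ) * f p - f p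
    + (Complex.I / 3) * ((p.2 : ℂ) * Dx f p - (p.1 : ℂ) * Dy f p)

open ContinuousLinearMap in
/-- The `ℝ`-linear map `ℝ × ℝ → ℂ`, `(a, b) ↦ a•c + b•d`. -/
def L1 (c d : ℂ) : ℝ × ℝ →L[ℝ] ℂ :=
  c • (Complex.ofRealCLM.comp (fst ℝ ℝ ℝ)) + d • (Complex.ofRealCLM.comp (snd ℝ ℝ ℝ))

@[simp] lemma L1_apply (c d : ℂ) (v : ℝ × ℝ) : L1 c d v = v.1 * c + v.2 * d := by
  simp [L1]; ring

lemma hasFD_congr {f : ℝ × ℝ → ℂ} {a b a' b' : ℂ} {p : ℝ × ℝ}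
    (h : HasFDerivAt f (L1 a b) p) (ha : a' = a) (hb : b' = b) :
    HasFDerivAt f (L1 a' b') p := by rw [ha, hb]; exact h

open ContinuousLinearMap in
lemma hasFD_x (p : ℝ × ℝ) : HasFDerivAt (fun q : ℝ × ℝ => (q.1 : ℂ)) (L1 1 0) p := by
  have h := (Complex.ofRealCLM.comp (fst ℝ ℝ ℝ)).hasFDerivAt (x := p)
  have e : L1 1 0 = Complex.ofRealCLM.comp (fst ℝ ℝ ℝ) :=
    ContinuousLinearMap.ext fun v => by simp
  rw [e]; exact h

open ContinuousLinearMap in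
lemma hasFD_y (p : ℝ × ℝ) : HasFDerivAt (fun q : ℝ × ℝ => (q.2 : ℂ)) (L1 0 1) p := by
  have h := (Complex.ofRealCLM.comp (snd ℝ ℝ ℝ)).hasFDerivAt (x := p)
  have e : L1 0 1 = Complex.ofRealCLM.comp (snd ℝ ℝ ℝ) :=
    ContinuousLinearMap.ext fun v => by simp
  rw [e]; exact h

lemma hasFD_const (c : ℂ) (p : ℝ × ℝ) : HasFDerivAt (fun _ : ℝ × ℝ => c) (L1 0 0) p := by
  have e : L1 (0:ℂ) 0 = 0 := ContinuousLinearMap.ext fun v => by simp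
  rw [e]; exact hasFDerivAt_const c p

lemma hasFD_add {f g : ℝ × ℝ → ℂ} {a b c d : ℂ} {p : ℝ × ℝ}
    (hf : HasFDerivAt f (L1 a b) p) (hg : HasFDerivAt g (L1 c d) p) :
    HasFDerivAt (fun q => f q + g q) (L1 (a + c) (b + d)) p := by
  have e : L1 (a + c) (b + d) = L1 a b + L1 c d :=
    ContinuousLinearMap.ext fun v => by simp; ring
  rw [e]; exact hf.add hg

lemma hasFD_sub {f g : ℝ × ℝ → ℂ} {a b c d : ℂ} {p : ℝ × ℝ}
    (hf : HasFDerivAt f (L1 a b) p) (hg : HasFDerivAt g (L1 c d) p) :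
    HasFDerivAt (fun q => f q - g q) (L1 (a - c) (b - d)) p := by
  have e : L1 (a - c) (b - d) = L1 a b - L1 c d :=
    ContinuousLinearMap.ext fun v => by simp; ring
  rw [e]; exact hf.sub hg

lemma hasFD_mul {f g : ℝ × ℝ → ℂ} {a b c d : ℂ} {p : ℝ × ℝ}
    (hf : HasFDerivAt f (L1 a b) p) (hg : HasFDerivAt g (L1 c d) p) :
    HasFDerivAt (fun q => f q * g q) (L1 (f p * c + g p * a) (f p * d + g p * b)) p := by
  have e : L1 (f p * c + g p * a) (f p * d + g p * b) = f p • L1 c d + g p • L1 a b :=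
    ContinuousLinearMap.ext fun v => by simp; ring
  rw [e]; exact hf.mul hg

/-- The Gaussian factor `e^{−(x² + y²)}`. -/
def Ee : ℝ × ℝ → ℂ := fun p => Complex.exp (-((p.1 ^ 2 + p.2 ^ 2 : ℝ) : ℂ))

lemma hasFD_E (p : ℝ × ℝ) :
    HasFDerivAt Ee (L1 (-2 * p.1 * Ee p) (-2 * p.2 * Ee p)) p := by
  have h1 : HasFDerivAt (fun q : ℝ × ℝ => -((q.1 ^ 2 + q.2 ^ 2 : ℝ) : ℂ))
      (L1 (-2 * p.1) (-2 * p.2)) p := by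
    have heq : (fun q : ℝ × ℝ => -((q.1 ^ 2 + q.2 ^ 2 : ℝ) : ℂ)) =
        fun q : ℝ × ℝ => (-1 : ℂ) * ((q.1 : ℂ) * q.1 + (q.2 : ℂ) * q.2) := by
      funext q; push_cast; ring
    rw [heq]
    exact hasFD_congr
      (hasFD_mul (hasFD_const (-1) p)
        (hasFD_add (hasFD_mul (hasFD_x p) (hasFD_x p))
          (hasFD_mul (hasFD_y p) (hasFD_y p))))
      (by ring) (by ring)
  have h2 := h1.cexp
  have e : L1 (-2 * p.1 * Ee p) (-2 * p.2 * Ee p)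
      = Complex.exp (-((p.1 ^ 2 + p.2 ^ 2 : ℝ) : ℂ)) • L1 (-2 * p.1) (-2 * p.2) :=
    ContinuousLinearMap.ext fun v => by simp [Ee]; ring
  rw [e]; exact h2

/-- Derivative of `P · e^{−(x²+y²)}` for differentiable `P`. -/
lemma hasFD_PE {P : ℝ × ℝ → ℂ} {a b : ℂ} {p : ℝ × ℝ}
    (hP : HasFDerivAt P (L1 a b) p) :
    HasFDerivAt (fun q => P q * Ee q)
      (L1 ((a - 2 * p.1 * P p) * Ee p) ((b - 2 * p.2 * P p) * Ee p)) p :=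
  hasFD_congr (hasFD_mul hP (hasFD_E p)) (by ring) (by ring)

lemma Dx_PE {P Pa Pb : ℝ × ℝ → ℂ}
    (hP : ∀ p, HasFDerivAt P (L1 (Pa p) (Pb p)) p) :
    Dx (fun q => P q * Ee q) = fun p => (Pa p - 2 * p.1 * P p) * Ee p := by
  funext p
  rw [Dx, (hasFD_PE (hP p)).fderiv]
  simp

lemma Dy_PE {P Pa Pb : ℝ × ℝ → ℂ}
    (hP : ∀ p, HasFDerivAt P (L1 (Pa p) (Pb p)) p) :
    Dy (fun q => P q * Ee q) = fun p => (Pb p - 2 * p.2 * P p) * Ee p := by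
  funext p
  rw [Dy, (hasFD_PE (hP p)).fderiv]
  simp

lemma hP1 (p : ℝ × ℝ) :
    HasFDerivAt (fun q : ℝ × ℝ => (q.1 : ℂ) + Complex.I * q.2) (L1 1 Complex.I) p :=
  hasFD_congr (hasFD_add (hasFD_x p) (hasFD_mul (hasFD_const Complex.I p) (hasFD_y p)))
    (by ring) (by ring)

lemma hA1 (p : ℝ × ℝ) :
    HasFDerivAt (fun q : ℝ × ℝ => (1 : ℂ) - 2 * q.1 * ((q.1 : ℂ) + Complex.I * q.2))
      (L1 (-2 * ((p.1 : ℂ) + Complex.I * p.2) - 2 * p.1) (-2 * p.1 * Complex.I)) p :=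
  hasFD_congr (hasFD_sub (hasFD_const 1 p)
      (hasFD_mul (hasFD_mul (hasFD_const 2 p) (hasFD_x p)) (hP1 p)))
    (by ring) (by ring)

lemma hB1 (p : ℝ × ℝ) :
    HasFDerivAt (fun q : ℝ × ℝ => Complex.I - 2 * q.2 * ((q.1 : ℂ) + Complex.I * q.2))
      (L1 (-2 * p.2) (-2 * ((p.1 : ℂ) + Complex.I * p.2) - 2 * p.2 * Complex.I)) p :=
  hasFD_congr (hasFD_sub (hasFD_const Complex.I p)
      (hasFD_mul (hasFD_mul (hasFD_const 2 p) (hasFD_y p)) (hP1 p)))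
    (by ring) (by ring)

lemma hw (p : ℝ × ℝ) :
    HasFDerivAt (fun q : ℝ × ℝ => (q.1 : ℂ) - Complex.I * q.2) (L1 1 (-Complex.I)) p :=
  hasFD_congr (hasFD_sub (hasFD_x p) (hasFD_mul (hasFD_const Complex.I p) (hasFD_y p)))
    (by ring) (by ring)

lemma hP2 (p : ℝ × ℝ) :
    HasFDerivAt (fun q : ℝ × ℝ => ((q.1 : ℂ) - Complex.I * q.2) ^ 2)
      (L1 (2 * ((p.1 : ℂ) - Complex.I * p.2))
          (-2 * Complex.I * ((p.1 : ℂ) - Complex.I * p.2))) p := by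
  have e : (fun q : ℝ × ℝ => ((q.1 : ℂ) - Complex.I * q.2) ^ 2)
      = fun q : ℝ × ℝ => ((q.1 : ℂ) - Complex.I * q.2) * ((q.1 : ℂ) - Complex.I * q.2) := by
    funext q; ring
  rw [e]
  exact hasFD_congr (hasFD_mul (hw p) (hw p)) (by ring) (by ring)

lemma hA2 (p : ℝ × ℝ) :
    HasFDerivAt (fun q : ℝ × ℝ =>
        2 * ((q.1 : ℂ) - Complex.I * q.2) - 2 * q.1 * ((q.1 : ℂ) - Complex.I * q.2) ^ 2)
      (L1 (2 - 2 * ((p.1 : ℂ) - Complex.I * p.2) ^ 2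
            - 4 * p.1 * ((p.1 : ℂ) - Complex.I * p.2))
          (-2 * Complex.I + 4 * Complex.I * p.1 * ((p.1 : ℂ) - Complex.I * p.2))) p :=
  hasFD_congr (hasFD_sub (hasFD_mul (hasFD_const 2 p) (hw p))
      (hasFD_mul (hasFD_mul (hasFD_const 2 p) (hasFD_x p)) (hP2 p)))
    (by ring) (by ring)

lemma hB2 (p : ℝ × ℝ) :
    HasFDerivAt (fun q : ℝ × ℝ =>
        -2 * Complex.I * ((q.1 : ℂ) - Complex.I * q.2)
          - 2 * q.2 * ((q.1 : ℂ) - Complex.I * q.2) ^ 2)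
      (L1 (-2 * Complex.I - 4 * p.2 * ((p.1 : ℂ) - Complex.I * p.2))
          (-2 - 2 * ((p.1 : ℂ) - Complex.I * p.2) ^ 2
            + 4 * Complex.I * p.2 * ((p.1 : ℂ) - Complex.I * p.2))) p :=
  hasFD_congr (hasFD_sub (hasFD_mul (hasFD_const (-2 * Complex.I) p) (hw p))
      (hasFD_mul (hasFD_mul (hasFD_const 2 p) (hasFD_y p)) (hP2 p)))
    (by ring) (by linear_combination (-2 : ℂ) * Complex.I_sq)

/-- **The two degenerate bosonic states of energy `E = 4/3` of `H_{1/3}`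
(Appendix of the paper):** `Ψ⁰₀₁ ∝ φ e^{−φφ̄}` and `Ψ⁰₀,₋₂ ∝ φ̄² e^{−φφ̄}`. -/
theorem ground_floor_states_energies :
    (∀ p : ℝ × ℝ,
      Dop (fun q => ((q.1 : ℂ) + Complex.I * q.2)
          * Complex.exp (-((q.1 ^ 2 + q.2 ^ 2 : ℝ) : ℂ))) p =
        (4 / 3 : ℂ) * (((p.1 : ℂ) + Complex.I * p.2)
          * Complex.exp (-((p.1 ^ 2 + p.2 ^ 2 : ℝ) : ℂ)))) ∧
    (∀ p : ℝ × ℝ,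
      Dop (fun q => ((q.1 : ℂ) - Complex.I * q.2) ^ 2
          * Complex.exp (-((q.1 ^ 2 + q.2 ^ 2 : ℝ) : ℂ))) p =
        (4 / 3 : ℂ) * (((p.1 : ℂ) - Complex.I * p.2) ^ 2
          * Complex.exp (-((p.1 ^ 2 + p.2 ^ 2 : ℝ) : ℂ)))) := by
  constructor
  · intro p
    have h1x : Dx (fun q => ((q.1 : ℂ) + Complex.I * q.2)
          * Complex.exp (-((q.1 ^ 2 + q.2 ^ 2 : ℝ) : ℂ)))
        = fun p => ((1 : ℂ) - 2 * p.1 * ((p.1 : ℂ) + Complex.I * p.2)) * Ee p :=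
      Dx_PE hP1
    have h1y : Dy (fun q => ((q.1 : ℂ) + Complex.I * q.2)
          * Complex.exp (-((q.1 ^ 2 + q.2 ^ 2 : ℝ) : ℂ)))
        = fun p => (Complex.I - 2 * p.2 * ((p.1 : ℂ) + Complex.I * p.2)) * Ee p :=
      Dy_PE hP1
    have h2x : Dx (fun p => ((1 : ℂ) - 2 * p.1 * ((p.1 : ℂ) + Complex.I * p.2)) * Ee p)
        = fun p => ((-2 * ((p.1 : ℂ) + Complex.I * p.2) - 2 * p.1)
            - 2 * p.1 * ((1 : ℂ) - 2 * p.1 * ((p.1 : ℂ) + Complex.I * p.2))) * Ee p :=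
      Dx_PE hA1
    have h2y : Dy (fun p => (Complex.I - 2 * p.2 * ((p.1 : ℂ) + Complex.I * p.2)) * Ee p)
        = fun p => ((-2 * ((p.1 : ℂ) + Complex.I * p.2) - 2 * p.2 * Complex.I)
            - 2 * p.2 * (Complex.I - 2 * p.2 * ((p.1 : ℂ) + Complex.I * p.2))) * Ee p :=
      Dy_PE hB1
    simp only [Dop, h1x, h1y, h2x, h2y]
    simp only [Ee]
    ring_nf
    simp [Complex.I_sq]
    ring_nf
  · intro p
    have h1x : Dx (fun q => ((q.1 : ℂ) - Complex.I * q.2) ^ 2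
          * Complex.exp (-((q.1 ^ 2 + q.2 ^ 2 : ℝ) : ℂ)))
        = fun p => (2 * ((p.1 : ℂ) - Complex.I * p.2)
            - 2 * p.1 * ((p.1 : ℂ) - Complex.I * p.2) ^ 2) * Ee p :=
      Dx_PE hP2
    have h1y : Dy (fun q => ((q.1 : ℂ) - Complex.I * q.2) ^ 2
          * Complex.exp (-((q.1 ^ 2 + q.2 ^ 2 : ℝ) : ℂ)))
        = fun p => (-2 * Complex.I * ((p.1 : ℂ) - Complex.I * p.2)
            - 2 * p.2 * ((p.1 : ℂ) - Complex.I * p.2) ^ 2) * Ee p :=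
      Dy_PE hP2
    have h2x : Dx (fun p => (2 * ((p.1 : ℂ) - Complex.I * p.2)
            - 2 * p.1 * ((p.1 : ℂ) - Complex.I * p.2) ^ 2) * Ee p)
        = fun p => ((2 - 2 * ((p.1 : ℂ) - Complex.I * p.2) ^ 2
              - 4 * p.1 * ((p.1 : ℂ) - Complex.I * p.2))
            - 2 * p.1 * (2 * ((p.1 : ℂ) - Complex.I * p.2)
              - 2 * p.1 * ((p.1 : ℂ) - Complex.I * p.2) ^ 2)) * Ee p :=
      Dx_PE hA2
    have h2y : Dy (fun p => (-2 * Complex.I * ((p.1 : ℂ) - Complex.I * p.2)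
            - 2 * p.2 * ((p.1 : ℂ) - Complex.I * p.2) ^ 2) * Ee p)
        = fun p => ((-2 - 2 * ((p.1 : ℂ) - Complex.I * p.2) ^ 2
              + 4 * Complex.I * p.2 * ((p.1 : ℂ) - Complex.I * p.2))
            - 2 * p.2 * (-2 * Complex.I * ((p.1 : ℂ) - Complex.I * p.2)
              - 2 * p.2 * ((p.1 : ℂ) - Complex.I * p.2) ^ 2)) * Ee p :=
      Dy_PE hB2
    simp only [Dop, h1x, h1y, h2x, h2y]
    simp only [Ee]
    push_cast
    linear_combination (((2 / 3 : ℂ) * p.1 ^ 2 - (2 / 3 : ℂ) * p.1 * p.2 * Complex.I)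
        * Complex.exp (-((p.1 : ℂ) ^ 2 + (p.2 : ℂ) ^ 2))) * Complex.I_sq

end
end
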